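/- On a star graph with N ≥ 2 edges, the constant N/2 in the graph Pólya–Szegő inequality ‖(Φ*)'‖ ≤ (N/2)‖Φ'‖ is sharp: for the tent function Φ with φ₁(x) = x on [0,1], φ₁(x) = 2−x on [1,2], φ₁ = 0 for x ≥ 2, and φ_i ≡ 0 for i ≠ 1, the rearrangement has components g(x) = 1 − (N/2)x for 0 ≤ x ≤ 2/N and g(x) = 0 for x ≥ 2/N, and one computes ‖Φ'‖² = 2 while ‖(Φ*)'‖² = N²/2, so ‖(Φ*)'‖² = (N²/4)‖Φ'‖². -/

import Mathlib

/-!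
Every superlevel set `{|Φ| ≥ s}`, `0 < s ≤ 1`, is the single interval `[s, 2 - s]` on the first
edge, so `λ(s) = 2 - 2s`. The rearrangement spreads this measure evenly over all `N` edges, which
shrinks the support from length `2` to `2/N` and multiplies the slope `1` by `N/2`; the Dirichlet
integral `∑ ∫ |slope|² · length` therefore grows from `2` to `N · (N/2)² · (2/N) = N²/2`.
-/

open MeasureTheory

noncomputable section

/-- Distribution function on the star graph (real-valued components):
`λ(s) = Σᵢ |{x > 0 : |φᵢ(x)| ≥ s}|`. -/
def lamG (N : ℕ) (Φ : Fin N → ℝ → ℝ) (s : ℝ) : ENNReal :=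
  ∑ i, volume {x ∈ Set.Ioi (0 : ℝ) | s ≤ |Φ i x|}

/-- The common profile `g(t) = sup{s : λ(s) > N t}` of the symmetric rearrangement. -/
def rearrG (N : ℕ) (Φ : Fin N → ℝ → ℝ) (t : ℝ) : ℝ :=
  sSup {s : ℝ | ENNReal.ofReal ((N : ℝ) * t) < lamG N Φ s}

/-- The tent function supported on the first edge of the star graph. -/
def tentFun (N : ℕ) (hN : 0 < N) : Fin N → ℝ → ℝ := fun i x =>
  if i = ⟨0, hN⟩ then (if x ≤ 1 then x else if x ≤ 2 then 2 - x else 0) else 0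

open Set

def tent (x : ℝ) : ℝ := if x ≤ 1 then x else if x ≤ 2 then 2 - x else 0

lemma tentFun_self {N : ℕ} (hN : 0 < N) : tentFun N hN ⟨0, hN⟩ = tent := rfl

lemma tentFun_of_ne {N : ℕ} (hN : 0 < N) {i : Fin N} (hi : i ≠ ⟨0, hN⟩) :
    tentFun N hN i = 0 := by
  funext x
  simp [tentFun, hi]

lemma tent_of_nonneg {x : ℝ} (hx : 0 ≤ x) : tent x = max 0 (min x (2 - x)) := by
  unfold tent
  split_ifs with h1 h2
  · rw [min_eq_left (by linarith), max_eq_right hx]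
  · rw [min_eq_right (by linarith), max_eq_right (by linarith)]
  · rw [min_eq_right (by linarith), max_eq_left (by linarith)]

lemma tent_superlevelSet {s : ℝ} (hs : 0 < s) :
    {x ∈ Ioi (0 : ℝ) | s ≤ |tent x|} = Icc s (2 - s) := by
  ext x
  simp only [mem_ofPred_eq, mem_Ioi, mem_Icc]
  constructor
  · rintro ⟨hx, hsx⟩
    rw [tent_of_nonneg hx.le, abs_of_nonneg (le_max_left _ _), le_max_iff, le_min_iff] at hsx
    rcases hsx with hs0 | ⟨h₁, h₂⟩
    · linarith
    · exact ⟨h₁, by linarith⟩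
  · rintro ⟨h₁, h₂⟩
    have hx : 0 < x := hs.trans_le h₁
    rw [tent_of_nonneg hx.le, abs_of_nonneg (le_max_left _ _), le_max_iff, le_min_iff]
    exact ⟨hx, Or.inr ⟨h₁, by linarith⟩⟩

lemma lamG_of_nonpos {N : ℕ} (hN : 0 < N) (Φ : Fin N → ℝ → ℝ) {s : ℝ} (hs : s ≤ 0) :
    lamG N Φ s = ⊤ := by
  have hset : ∀ i, {x ∈ Ioi (0 : ℝ) | s ≤ |Φ i x|} = Ioi 0 := fun i =>
    sep_eq_self_iff_mem_true.2 fun x _ => hs.trans (abs_nonneg _)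
  simp only [lamG, hset, Real.volume_Ioi, Finset.sum_const, Finset.card_univ, Fintype.card_fin]
  rw [nsmul_eq_mul, ENNReal.mul_top (by exact_mod_cast hN.ne')]

lemma lamG_tentFun {N : ℕ} (hN : 0 < N) {s : ℝ} (hs : 0 < s) :
    lamG N (tentFun N hN) s = ENNReal.ofReal (2 - 2 * s) := by
  rw [lamG, Fintype.sum_eq_single ⟨0, hN⟩ fun i hi => ?_, tentFun_self,
    tent_superlevelSet hs, Real.volume_Icc]
  · ring_nf
  · simp [tentFun_of_ne hN hi, hs.not_ge]

lemma rearrG_tentFun {N : ℕ} (hN : 0 < N) {t : ℝ} (ht : 0 ≤ t) :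
    rearrG N (tentFun N hN) t = max 0 (1 - ((N : ℝ) / 2) * t) := by
  have hNt : 0 ≤ (N : ℝ) * t := by positivity
  have hS : {s : ℝ | ENNReal.ofReal ((N : ℝ) * t) < lamG N (tentFun N hN) s}
      = Iic 0 ∪ Iio (1 - ((N : ℝ) / 2) * t) := by
    ext s
    rcases le_or_gt s 0 with hs | hs
    · simp only [mem_ofPred_eq, lamG_of_nonpos hN _ hs, ENNReal.ofReal_lt_top, mem_union, mem_Iic,
        hs, true_or]
    · rw [mem_ofPred_eq, lamG_tentFun hN hs, ENNReal.ofReal_lt_ofReal_iff_of_nonneg hNt]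
      simp only [mem_union, mem_Iic, mem_Iio, hs.not_ge, false_or]
      constructor <;> intro h <;> linarith
  rw [rearrG, hS, csSup_union bddAbove_Iic nonempty_Iic bddAbove_Iio nonempty_Iio,
    csSup_Iic, csSup_Iio]

lemma ite_le_sub_mul_eq_max {a b c : ℝ} (hc : 0 < c) (hb : b = c * a) (x : ℝ) :
    (if x ≤ a then b - c * x else 0) = max 0 (b - c * x) := by
  split_ifs with h
  · rw [max_eq_right (by nlinarith)]
  · rw [max_eq_left (by nlinarith)]

lemma deriv_ite_le_of_lt {f g : ℝ → ℝ} {a x : ℝ} (hx : x < a) :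
    deriv (fun y => if y ≤ a then f y else g y) x = deriv f x :=
  Filter.EventuallyEq.deriv_eq <| by
    filter_upwards [Iio_mem_nhds hx] with y hy
    rw [if_pos (le_of_lt hy)]

lemma deriv_ite_le_of_gt {f g : ℝ → ℝ} {a x : ℝ} (hx : a < x) :
    deriv (fun y => if y ≤ a then f y else g y) x = deriv g x :=
  Filter.EventuallyEq.deriv_eq <| by
    filter_upwards [Ioi_mem_nhds hx] with y hy
    rw [if_neg (not_le.2 hy)]

lemma setIntegral_Ioi_zero_of_eq_ite_off_countable {F : ℝ → ℝ} {a c : ℝ} (ha : 0 ≤ a)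
    {S : Set ℝ} (hS : S.Countable) (hF : ∀ x, 0 < x → x ∉ S → F x = if x < a then c else 0) :
    ∫ x in Ioi 0, F x = a * c := by
  have hae : F =ᵐ[volume.restrict (Ioi 0)] (Ioo 0 a).indicator fun _ => c := by
    filter_upwards [ae_restrict_mem measurableSet_Ioi,
      ae_restrict_of_ae (hS.ae_notMem volume)] with x (hx : 0 < x) hxS
    rw [hF x hx hxS]
    by_cases hxa : x < a
    · rw [if_pos hxa, indicator_of_mem (mem_Ioo.2 ⟨hx, hxa⟩)]
    · rw [if_neg hxa, indicator_of_notMem fun h => hxa h.2]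
  rw [integral_congr_ae hae, setIntegral_indicator measurableSet_Ioo,
    inter_eq_self_of_subset_right Ioo_subset_Ioi_self, setIntegral_const,
    Real.volume_real_Ioo_of_le ha, smul_eq_mul]
  ring

lemma integral_deriv_ramp_sq {a : ℝ} (ha : 0 ≤ a) (b c : ℝ) :
    ∫ x in Ioi 0, (deriv (fun x => if x ≤ a then b - c * x else 0) x) ^ 2 = a * c ^ 2 := by
  refine setIntegral_Ioi_zero_of_eq_ite_off_countable ha (countable_singleton a)
    fun x _ hxa => ?_
  rcases lt_or_gt_of_ne hxa with h | h
  · rw [deriv_ite_le_of_lt h, if_pos h]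
    simp [deriv_const_sub]
  · rw [deriv_ite_le_of_gt h, if_neg h.not_gt]
    simp

lemma deriv_tent_sq {x : ℝ} (hx : x ∉ ({1, 2} : Set ℝ)) :
    deriv tent x ^ 2 = if x < 2 then 1 else 0 := by
  simp only [mem_insert_iff, mem_singleton_iff, not_or] at hx
  unfold tent
  rcases lt_or_gt_of_ne hx.1 with h1 | h1
  · rw [deriv_ite_le_of_lt h1, deriv_id'', if_pos (by linarith)]
    norm_num
  rw [deriv_ite_le_of_gt h1]
  rcases lt_or_gt_of_ne hx.2 with h2 | h2
  · rw [deriv_ite_le_of_lt h2, if_pos h2]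
    simp
  · rw [deriv_ite_le_of_gt h2, if_neg h2.not_gt]
    simp

lemma integral_deriv_tent_sq : ∫ x in Ioi 0, (deriv tent x) ^ 2 = 2 := by
  simpa using setIntegral_Ioi_zero_of_eq_ite_off_countable zero_le_two
    (toFinite {1, 2}).countable fun x _ hx => deriv_tent_sq hx

/-- Sharpness of the constant `N/2` in the graph Pólya–Szegő inequality: for the tent
function `Φ`, the rearrangement profile is `g(x) = 1 - (N/2)x` on `[0, 2/N]` and `0`
afterwards, `‖Φ'‖² = 2`, `‖(Φ*)'‖² = N²/2`, so `‖(Φ*)'‖² = (N²/4)‖Φ'‖²`. -/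
theorem polya_szego_constant_sharp (N : ℕ) (hN : 2 ≤ N) :
    have hN0 : 0 < N := by omega
    let Φ := tentFun N hN0
    let g : ℝ → ℝ := fun x => if x ≤ 2 / (N : ℝ) then 1 - ((N : ℝ) / 2) * x else 0
    (∀ x : ℝ, 0 ≤ x → rearrG N Φ x = g x) ∧
    (∑ i, ∫ x in Set.Ioi (0 : ℝ), (deriv (Φ i) x) ^ 2) = 2 ∧
    (N : ℝ) * (∫ x in Set.Ioi (0 : ℝ), (deriv g x) ^ 2) = (N : ℝ) ^ 2 / 2 ∧
    (N : ℝ) ^ 2 / 2 = ((N : ℝ) ^ 2 / 4) * 2 := by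
  intro hN0 Φ g
  have hNpos : (0 : ℝ) < N := by exact_mod_cast hN0
  refine ⟨fun x hx => ?_, ?_, ?_, by ring⟩
  · rw [rearrG_tentFun hN0 hx]
    exact (ite_le_sub_mul_eq_max (by positivity) (by field_simp) x).symm
  · rw [Fintype.sum_eq_single ⟨0, hN0⟩ fun i hi => by simp [Φ, tentFun_of_ne hN0 hi]]
    exact integral_deriv_tent_sq
  · rw [integral_deriv_ramp_sq (by positivity)]
    field_simp

end
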